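/- arXiv:1903.00336 — 12 statements merged into one kernel-verified Lean document; each statement's English description precedes it below -/
import Mathlib

section
/- If D ⊆ V is a coherent set of desirable options, then K_D = {A finite subset of V : A ∩ D ≠ ∅} is a coherent set of desirable option sets, i.e., K_D satisfies: (K0) A ∈ K_D implies A \ {0} ∈ K_D; (K1) {0} ∉ K_D; (K2) {u} ∈ K_D for all u ∈ V with u > 0; (K3) if A1, A2 ∈ K_D and for each u ∈ A1, v ∈ A2 we choose λ_{u,v}, μ_{u,v} ≥ 0 with λ_{u,v} + μ_{u,v} > 0, then {λ_{u,v} u + μ_{u,v} v : u ∈ A1, v ∈ A2} ∈ K_D; (K4) if A1 ∈ K_D and A1 ⊆ A2 ∈ Q then A2 ∈ K_D. -/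
/-- Axiom K0: removal of the zero option. -/
def AxK0 {V : Type*} [AddCommGroup V] [Module ℝ V] (K : Set (Set V)) : Prop :=
  ∀ A ∈ K, A \ {0} ∈ K

/-- Axiom K1: the singleton of zero is not a desirable option set. -/
def AxK1 {V : Type*} [AddCommGroup V] [Module ℝ V] (K : Set (Set V)) : Prop :=
  ({0} : Set V) ∉ K

/-- Axiom K2: singletons of (background-)positive options are desirable option sets. -/
def AxK2 {V : Type*} [AddCommGroup V] [Module ℝ V] (Vpos : Set V) (K : Set (Set V)) : Prop :=
  ∀ u ∈ Vpos, ({u} : Set V) ∈ K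

/-- Axiom K3: closure under elementwise positive combinations of two members. -/
def AxK3 {V : Type*} [AddCommGroup V] [Module ℝ V] (K : Set (Set V)) : Prop :=
  ∀ A1 ∈ K, ∀ A2 ∈ K, ∀ l m : V → V → ℝ,
    (∀ u ∈ A1, ∀ v ∈ A2, 0 ≤ l u v ∧ 0 ≤ m u v ∧ 0 < l u v + m u v) →
    {w : V | ∃ u ∈ A1, ∃ v ∈ A2, w = l u v • u + m u v • v} ∈ K

/-- Axiom K4: upward closure under inclusion (within finite option sets). -/
def AxK4 {V : Type*} [AddCommGroup V] [Module ℝ V] (K : Set (Set V)) : Prop :=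
  ∀ A1 ∈ K, ∀ A2 : Set V, A2.Finite → A1 ⊆ A2 → A2 ∈ K

/-- Coherence of a set of desirable option sets (a subset of the finite option sets). -/
def CoherentK {V : Type*} [AddCommGroup V] [Module ℝ V] (Vpos : Set V)
    (K : Set (Set V)) : Prop :=
  (∀ A ∈ K, A.Finite) ∧ AxK0 K ∧ AxK1 K ∧ AxK2 Vpos K ∧ AxK3 K ∧ AxK4 K

/-- Coherence of a set of desirable options. -/
def CoherentD {V : Type*} [AddCommGroup V] [Module ℝ V] (Vpos D : Set V) : Prop :=
  (0 : V) ∉ D ∧ Vpos ⊆ D ∧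
  ∀ u ∈ D, ∀ v ∈ D, ∀ l m : ℝ, 0 ≤ l → 0 ≤ m → 0 < l + m → l • u + m • v ∈ D

/-- `K_D`: the binary set of desirable option sets generated by `D`. -/
def KD {V : Type*} [AddCommGroup V] [Module ℝ V] (D : Set V) : Set (Set V) :=
  {A | A.Finite ∧ (A ∩ D).Nonempty}

/-- `D_K`: the set of options whose singletons belong to `K`. -/
def DK {V : Type*} [AddCommGroup V] [Module ℝ V] (K : Set (Set V)) : Set V :=
  {u | ({u} : Set V) ∈ K}

/-- A set of desirable option sets is binary if it is determined by singleton assessments. -/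
def BinaryK {V : Type*} [AddCommGroup V] [Module ℝ V] (K : Set (Set V)) : Prop :=
  ∀ A : Set V, A.Finite → (A ∈ K ↔ ∃ u ∈ A, ({u} : Set V) ∈ K)

/-- `posi S`: all finite positive linear combinations of elements of `S`. -/
def Posi {V : Type*} [AddCommGroup V] [Module ℝ V] (S : Set V) : Set V :=
  {w | ∃ n : ℕ, 0 < n ∧ ∃ (l : Fin n → ℝ) (u : Fin n → V),
    (∀ k, 0 < l k) ∧ (∀ k, u k ∈ S) ∧ w = ∑ k, l k • u k}

/-- Total set of desirable options. -/
def TotalD {V : Type*} [AddCommGroup V] [Module ℝ V] (Vpos D : Set V) : Prop :=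
  CoherentD Vpos D ∧ ∀ u : V, u ≠ 0 → u ∈ D ∨ -u ∈ D

/-- Total set of desirable option sets. -/
def TotalK {V : Type*} [AddCommGroup V] [Module ℝ V] (Vpos : Set V)
    (K : Set (Set V)) : Prop :=
  CoherentK Vpos K ∧ ∀ u : V, u ≠ 0 → ({u, -u} : Set V) ∈ K

/-- Mixing set of desirable options. -/
def MixingD {V : Type*} [AddCommGroup V] [Module ℝ V] (Vpos D : Set V) : Prop :=
  CoherentD Vpos D ∧ ∀ A : Set V, A.Finite → (Posi A ∩ D).Nonempty → (A ∩ D).Nonempty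

/-- Mixing set of desirable option sets. -/
def MixingK {V : Type*} [AddCommGroup V] [Module ℝ V] (Vpos : Set V)
    (K : Set (Set V)) : Prop :=
  CoherentK Vpos K ∧
    ∀ A B : Set V, A.Finite → B ∈ K → A ⊆ B → B ⊆ Posi A → A ∈ K

/-- `V_{≤0}`: the non-positive options (zero together with the strictly negative options). -/
def Vneg {V : Type*} [AddCommGroup V] [Module ℝ V] (Vpos : Set V) : Set V :=
  {u | u = 0 ∨ -u ∈ Vpos}

/-- The operator `RN`, adding smaller option sets by removing non-positive options. -/
def RN {V : Type*} [AddCommGroup V] [Module ℝ V] (Vpos : Set V)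
    (K : Set (Set V)) : Set (Set V) :=
  {A | A.Finite ∧ ∃ B ∈ K, B \ Vneg Vpos ⊆ A ∧ A ⊆ B}

/-! A finite option set is in `K_D` because of a single witness in `D`; every axiom for `K_D`
follows by applying the matching coherence axiom of `D` to such witnesses, and for (K3) to the
combination of the two witnesses of `A1` and `A2`. -/

section KD

variable {V : Type*} [AddCommGroup V] [Module ℝ V] {D : Set V}

theorem axK0_KD (h0 : (0 : V) ∉ D) : AxK0 (KD D) := by
  rintro A ⟨hAf, u, huA, huD⟩
  refine ⟨hAf.sdiff, u, ⟨huA, ?_⟩, huD⟩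
  rintro rfl
  exact h0 huD

theorem axK1_KD (h0 : (0 : V) ∉ D) : AxK1 (KD D) := by
  rintro ⟨-, u, rfl, huD⟩
  exact h0 huD

theorem axK2_KD {Vpos : Set V} (hpos : Vpos ⊆ D) : AxK2 Vpos (KD D) :=
  fun u hu => ⟨Set.finite_singleton u, u, rfl, hpos hu⟩

theorem axK3_KD
    (hcomb : ∀ u ∈ D, ∀ v ∈ D, ∀ l m : ℝ, 0 ≤ l → 0 ≤ m → 0 < l + m → l • u + m • v ∈ D) :
    AxK3 (KD D) := by
  rintro A1 ⟨hA1, u, huA, huD⟩ A2 ⟨hA2, v, hvA, hvD⟩ l m hlm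
  have hfin : {w : V | ∃ u ∈ A1, ∃ v ∈ A2, w = l u v • u + m u v • v}.Finite :=
    (hA1.image2 (fun u v => l u v • u + m u v • v) hA2).subset
      fun _ ⟨u, hu, v, hv, hw⟩ => ⟨u, hu, v, hv, hw.symm⟩
  obtain ⟨hl, hm, hpos⟩ := hlm u huA v hvA
  exact ⟨hfin, _, ⟨u, huA, v, hvA, rfl⟩, hcomb u huD v hvD _ _ hl hm hpos⟩

theorem axK4_KD : AxK4 (KD D) :=
  fun _ ⟨_, u, huA, huD⟩ _ hA2 hsub => ⟨hA2, u, hsub huA, huD⟩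

end KD

theorem stmt2 {V : Type*} [AddCommGroup V] [Module ℝ V]
    (Vpos D : Set V) (hD : CoherentD Vpos D) :
    CoherentK Vpos (KD D) := by
  obtain ⟨h0, hpos, hcomb⟩ := hD
  exact ⟨fun _ hA => hA.1, axK0_KD h0, axK1_KD h0, axK2_KD hpos, axK3_KD hcomb, axK4_KD⟩
end

section
/- If K is a coherent set of desirable option sets, then D_K := {u ∈ V : {u} ∈ K} is a coherent set of desirable options, and K_{D_K} ⊆ K, i.e., every finite A with A ∩ D_K ≠ ∅ belongs to K. -/
theorem stmt4 {V : Type*} [AddCommGroup V] [Module ℝ V]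
    (Vpos : Set V) (K : Set (Set V)) (hK : CoherentK Vpos K) :
    CoherentD Vpos (DK K) ∧ KD (DK K) ⊆ K := by
  obtain ⟨hfin, hK0, hK1, hK2, hK3, hK4⟩ := hK
  constructor
  · refine ⟨hK1, fun u hu => hK2 u hu, ?_⟩
    intro u hu v hv l m hl hm hlm
    have := hK3 {u} hu {v} hv (fun _ _ => l) (fun _ _ => m)
      (fun _ _ _ _ => ⟨hl, hm, hlm⟩)
    have heq : {w : V | ∃ u' ∈ ({u} : Set V), ∃ v' ∈ ({v} : Set V),
        w = l • u' + m • v'} = {l • u + m • v} := by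
      ext w; simp [Set.mem_singleton_iff]
    rw [heq] at this
    exact this
  · rintro A ⟨hAfin, u, huA, huD⟩
    exact hK4 {u} huD A hAfin (Set.singleton_subset_iff.mpr huA)
end

section
/- Let K be a set of desirable option sets satisfying axioms K2 and K3. If A ∈ K, v ∈ A and v' ∈ V with v' > v (strict background ordering), then the option set {v'} ∪ (A \ {v}) obtained by replacing v with the dominating v' also belongs to K. -/
theorem stmt6 {V : Type*} [AddCommGroup V] [Module ℝ V]
    (Vpos : Set V) (K : Set (Set V)) (hK : ∀ A ∈ K, A.Finite)
    (h2 : AxK2 Vpos K) (h3 : AxK3 K)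
    (A : Set V) (hA : A ∈ K) (v v' : V) (hv : v ∈ A)
    (hgt : v' - v ∈ Vpos) :
    insert v' (A \ {v}) ∈ K := by
  classical
  have hsing : ({v' - v} : Set V) ∈ K := h2 _ hgt
  have key := h3 A hA {v' - v} hsing (fun _ _ => 1)
    (fun u _ => if u = v then 1 else 0) ?_
  · convert key using 1
    ext w
    simp only [Set.mem_setOf_eq, Set.mem_singleton_iff, Set.mem_insert_iff, Set.mem_diff]
    constructor
    · rintro (rfl | ⟨hwA, hwv⟩)
      · exact ⟨v, hv, _, rfl, by simp⟩
      · exact ⟨w, hwA, _, rfl, by simp [hwv]⟩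
    · rintro ⟨u, hu, x, rfl, rfl⟩
      by_cases h : u = v
      · subst h; left; simp
      · right; simp [h, hu]
  · intro u _ x _
    by_cases h : u = v <;> simp [h]
end

section
/- Let K be a set of desirable option sets satisfying axiom K3. If A ∈ K contains two distinct elements w and λw with w ≠ 0 and λ > 0, λ ≠ 1, then A \ {w} also belongs to K. -/
theorem stmt7 {V : Type*} [AddCommGroup V] [Module ℝ V]
    (K : Set (Set V)) (hK : ∀ A ∈ K, A.Finite) (h3 : AxK3 K)
    (A : Set V) (hA : A ∈ K) (w : V) (hw : w ∈ A) (hw0 : w ≠ 0)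
    (l : ℝ) (hl : 0 < l) (hl1 : l ≠ 1) (hlw : l • w ∈ A) :
    A \ {w} ∈ K := by
  classical
  have hlww : l • w ≠ w := by
    intro h
    have : (l - 1) • w = 0 := by rw [sub_smul, one_smul, h, sub_self]
    rcases smul_eq_zero.mp this with h' | h'
    · exact hl1 (by linarith [sub_eq_zero.mp (by linarith : l - 1 = 0)])
    · exact hw0 h'
  have key := h3 A hA A hA
    (fun u v => if u = w then (if v = w then l else 0) else 1)
    (fun u v => if u = w then (if v = w then 0 else 1) else 0)
    (by
      intro u hu v hv
      by_cases hu' : u = w <;> by_cases hv' : v = w <;>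
        simp [hu', hv', hl, hl.le])
  have heq : {x : V | ∃ u ∈ A, ∃ v ∈ A,
      x = (if u = w then (if v = w then l else 0) else 1) • u +
        (if u = w then (if v = w then (0:ℝ) else 1) else 0) • v} = A \ {w} := by
    ext x
    simp only [Set.mem_setOf_eq, Set.mem_diff, Set.mem_singleton_iff]
    constructor
    · rintro ⟨u, hu, v, hv, rfl⟩
      by_cases hu' : u = w
      · by_cases hv' : v = w
        · rw [if_pos hu', if_pos hv', if_pos hu', if_pos hv', hu', zero_smul, add_zero]
          exact ⟨hlw, hlww⟩
        · rw [if_pos hu', if_neg hv', if_pos hu', if_neg hv', zero_smul, one_smul, zero_add]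
          exact ⟨hv, hv'⟩
      · rw [if_neg hu', if_neg hu', one_smul, zero_smul, add_zero]
        exact ⟨hu, hu'⟩
    · rintro ⟨hxA, hxw⟩
      refine ⟨x, hxA, x, hxA, ?_⟩
      simp [hxw]
  beta_reduce at key
  rw [← heq]
  exact key
end

section
/- A coherent set of desirable options D is mixing if and only if its complement D^c = V \ D is closed under positive linear combinations, i.e., posi(D^c) = D^c, where posi(S) is the set of all finite positive linear combinations of elements of S. -/
theorem stmt11 {V : Type*} [AddCommGroup V] [Module ℝ V]
    (Vpos D : Set V) (hD : CoherentD Vpos D) :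
    (∀ A : Set V, A.Finite → (Posi A ∩ D).Nonempty → (A ∩ D).Nonempty) ↔
      Posi Dᶜ = Dᶜ := by
  constructor
  · intro hmix
    apply Set.Subset.antisymm
    · intro w hw
      obtain ⟨n, hn, l, u, hl, hu, hwsum⟩ := hw
      intro hwD
      obtain ⟨x, hxA, hxD⟩ := hmix (Set.range u) (Set.finite_range u)
        ⟨w, ⟨n, hn, l, u, hl, fun k => Set.mem_range_self k, hwsum⟩, hwD⟩
      obtain ⟨k, rfl⟩ := hxA
      exact hu k hxD
    · intro w hw
      exact ⟨1, one_pos, fun _ => 1, fun _ => w, fun _ => one_pos, fun _ => hw,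
        by simp⟩
  · intro hposi A hA ⟨w, hwP, hwD⟩
    by_contra hne
    have hAsub : A ⊆ Dᶜ := by
      intro x hx hxD
      exact hne ⟨x, hx, hxD⟩
    have : w ∈ Posi Dᶜ := by
      obtain ⟨n, hn, l, u, hl, hu, hwsum⟩ := hwP
      exact ⟨n, hn, l, u, hl, fun k => hAsub (hu k), hwsum⟩
    rw [hposi] at this
    exact this hwD
end

section
/- Every total set of desirable options is mixing: if D is coherent and for all nonzero u either u ∈ D or −u ∈ D, then for every finite A ⊆ V with posi(A) ∩ D ≠ ∅ we also have A ∩ D ≠ ∅. -/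
lemma coherentD_sum_mem {V : Type*} [AddCommGroup V] [Module ℝ V] {Vpos D : Set V}
    (hD : CoherentD Vpos D) {ι : Type*} (s : Finset ι) (hs : s.Nonempty)
    (l : ι → ℝ) (u : ι → V) (hl : ∀ i ∈ s, 0 < l i) (hu : ∀ i ∈ s, u i ∈ D) :
    ∑ i ∈ s, l i • u i ∈ D := by
  classical
  induction s using Finset.cons_induction with
  | empty => exact absurd hs (by simp)
  | cons a s ha ih =>
    rw [Finset.sum_cons]
    rcases s.eq_empty_or_nonempty with rfl | hs'
    · simp only [Finset.sum_empty, add_zero]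
      have := hD.2.2 (u a) (hu a (by simp)) (u a) (hu a (by simp)) (l a) 0
        (le_of_lt (hl a (by simp))) le_rfl (by simpa using hl a (by simp))
      simpa using this
    · have hsum := ih hs' (fun i hi => hl i (Finset.mem_cons_of_mem hi))
        (fun i hi => hu i (Finset.mem_cons_of_mem hi))
      have := hD.2.2 (u a) (hu a (Finset.mem_cons_self a s)) _ hsum (l a) 1
        (le_of_lt (hl a (Finset.mem_cons_self a s))) zero_le_one
        (by linarith [hl a (Finset.mem_cons_self a s)])
      simpa using this

theorem stmt12 {V : Type*} [AddCommGroup V] [Module ℝ V]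
    (Vpos D : Set V) (h : TotalD Vpos D) :
    ∀ A : Set V, A.Finite → (Posi A ∩ D).Nonempty → (A ∩ D).Nonempty := by
  classical
  rintro A hA ⟨w, ⟨n, hn, l, u, hl, huA, rfl⟩, hwD⟩
  obtain ⟨hD, htot⟩ := h
  by_contra hempty
  rw [Set.not_nonempty_iff_eq_empty] at hempty
  have huD : ∀ k, u k ∉ D := by
    intro k hk
    exact Set.eq_empty_iff_forall_notMem.mp hempty (u k) ⟨huA k, hk⟩
  have hkey : ∀ k, u k = 0 ∨ -u k ∈ D := by
    intro k
    by_cases h0 : u k = 0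
    · exact Or.inl h0
    · rcases htot (u k) h0 with h1 | h1
      · exact absurd h1 (huD k)
      · exact Or.inr h1
  set t := Finset.univ.filter (fun k : Fin n => u k ≠ 0) with ht
  have hsum : ∑ k ∈ t, l k • u k = ∑ k, l k • u k := by
    apply Finset.sum_filter_of_ne
    intro k _ hk h0
    exact hk (by rw [h0, smul_zero])
  rcases t.eq_empty_or_nonempty with h0 | hne
  · have : (∑ k, l k • u k) = 0 := by rw [← hsum, h0, Finset.sum_empty]
    rw [this] at hwD
    exact hD.1 hwD
  · have hneg : ∑ k ∈ t, l k • (-u k) ∈ D := by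
      apply coherentD_sum_mem hD t hne
      · intro i _; exact hl i
      · intro i hi
        rcases hkey i with h1 | h1
        · exact absurd h1 (by simpa [ht] using hi)
        · exact h1
    have hneg' : -(∑ k, l k • u k) ∈ D := by
      rw [← hsum, ← Finset.sum_neg_distrib]
      simpa using hneg
    have := hD.2.2 _ hwD _ hneg' 1 1 zero_le_one zero_le_one (by norm_num)
    simp only [one_smul, add_neg_cancel] at this
    exact hD.1 this
end

section
/- For any set of desirable options D, the binary set of desirable option sets K_D is mixing if and only if D is mixing; that is, K_D is coherent and satisfies 'if B ∈ K_D and A ⊆ B ⊆ posi(A) then A ∈ K_D' if and only if D is coherent and satisfies 'posi(A) ∩ D ≠ ∅ implies A ∩ D ≠ ∅ for all finite A'. -/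
/-!
Membership of a finite set `A` in `K_D` only asks whether `A` meets `D`, so coherence of `K_D`
is coherence of `D` read off singletons, and the mixing property of `K_D` translates directly:
`B ∈ K_D` with `B ⊆ posi(A)` produces an element of `posi(A) ∩ D`, and conversely a point
`w ∈ posi(A) ∩ D` makes `B = A ∪ {w}` a witness of the `K_D` mixing hypothesis.
-/

section

variable {V : Type*} [AddCommGroup V] [Module ℝ V]

lemma subset_posi (A : Set V) : A ⊆ Posi A := fun u hu =>
  ⟨1, one_pos, fun _ => 1, fun _ => u, fun _ => one_pos, fun _ => hu, by simp⟩

lemma singleton_mem_KD_iff {D : Set V} {u : V} : ({u} : Set V) ∈ KD D ↔ u ∈ D := by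
  simp [KD]

lemma coherentK_KD_of_coherentD {Vpos D : Set V} (hD : CoherentD Vpos D) :
    CoherentK Vpos (KD D) := by
  obtain ⟨h0, hpos, hcomb⟩ := hD
  refine ⟨fun A hA => hA.1, ?_, ?_, fun u hu => singleton_mem_KD_iff.2 (hpos hu), ?_, ?_⟩
  · rintro A ⟨hfin, u, huA, huD⟩
    exact ⟨hfin.sdiff, u, ⟨huA, fun h => h0 (h ▸ huD)⟩, huD⟩
  · exact fun h => h0 (singleton_mem_KD_iff.1 h)
  · rintro A1 ⟨hf1, u, hu1, huD⟩ A2 ⟨hf2, v, hv2, hvD⟩ l m hlm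
    refine ⟨(hf1.image2 (fun a b => l a b • a + m a b • b) hf2).subset ?_, ?_⟩
    · rintro _ ⟨a, ha, b, hb, rfl⟩
      exact ⟨a, ha, b, hb, rfl⟩
    · obtain ⟨hl, hm, hs⟩ := hlm u hu1 v hv2
      exact ⟨_, ⟨u, hu1, v, hv2, rfl⟩, hcomb u huD v hvD _ _ hl hm hs⟩
  · rintro A1 ⟨-, u, hu1, huD⟩ A2 hf2 hsub
    exact ⟨hf2, u, hsub hu1, huD⟩

lemma coherentD_of_coherentK_KD {Vpos D : Set V} (hK : CoherentK Vpos (KD D)) :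
    CoherentD Vpos D := by
  obtain ⟨-, -, hK1, hK2, hK3, -⟩ := hK
  refine ⟨fun h => hK1 (singleton_mem_KD_iff.2 h), fun u hu => singleton_mem_KD_iff.1 (hK2 u hu),
    ?_⟩
  intro u hu v hv l m hl hm hs
  obtain ⟨-, w, ⟨a, rfl, b, rfl, rfl⟩, hwD⟩ :=
    hK3 _ (singleton_mem_KD_iff.2 hu) _ (singleton_mem_KD_iff.2 hv) (fun _ _ => l) (fun _ _ => m)
      (fun _ _ _ _ => ⟨hl, hm, hs⟩)
  exact hwD

lemma coherentK_KD_iff {Vpos D : Set V} : CoherentK Vpos (KD D) ↔ CoherentD Vpos D :=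
  ⟨coherentD_of_coherentK_KD, coherentK_KD_of_coherentD⟩

lemma mixing_KD_iff {D : Set V} :
    (∀ A B : Set V, A.Finite → B ∈ KD D → A ⊆ B → B ⊆ Posi A → A ∈ KD D) ↔
      ∀ A : Set V, A.Finite → (Posi A ∩ D).Nonempty → (A ∩ D).Nonempty := by
  constructor
  · rintro hmix A hA ⟨w, hwP, hwD⟩
    have hB : A ∪ {w} ∈ KD D := ⟨hA.union (Set.finite_singleton w), w, Or.inr rfl, hwD⟩
    have hBP : A ∪ {w} ⊆ Posi A :=
      Set.union_subset (subset_posi A) (Set.singleton_subset_iff.2 hwP)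
    exact (hmix A _ hA hB Set.subset_union_left hBP).2
  · rintro hmix A B hA ⟨-, w, hwB, hwD⟩ - hBP
    exact ⟨hA, hmix A hA ⟨w, hBP hwB, hwD⟩⟩

end

theorem stmt13 {V : Type*} [AddCommGroup V] [Module ℝ V]
    (Vpos D : Set V) :
    MixingK Vpos (KD D) ↔ MixingD Vpos D :=
  and_congr coherentK_KD_iff mixing_KD_iff
end

section
/- A coherent set of desirable option sets K is binary if and only if for every A ∈ K with at least two elements, there exists u ∈ A such that A \ {u} ∈ K. -/
/-!
If `K` is binary, a member with two elements stays desirable after removing an element other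
than a desirable one. Conversely, given `A ∈ K`, take a member of `K` inside `A` that is minimal
for inclusion: it is nonempty by K1 and K4, and it cannot have two elements, since removing one
would leave a smaller member. So it is a desirable singleton in `A`; K4 gives the other direction
of binarity.
-/

lemma exists_singleton_mem_of_forall_exists_diff_singleton_mem {α : Type*} {K : Set (Set α)}
    (hempty : ∅ ∉ K) (hremove : ∀ A ∈ K, A.Nontrivial → ∃ u ∈ A, A \ {u} ∈ K)
    {A : Set α} (hAf : A.Finite) (hA : A ∈ K) : ∃ u ∈ A, ({u} : Set α) ∈ K := by
  obtain ⟨B, hBA, hBmin⟩ := (hAf.finite_subsets.inter_of_left K).exists_le_minimal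
    (show A ∈ {B | B ⊆ A} ∩ K from ⟨Set.Subset.refl A, hA⟩)
  have hBK : B ∈ K := hBmin.prop.2
  obtain ⟨v, hv⟩ := Set.nonempty_iff_ne_empty.2 fun h => hempty (h ▸ hBK)
  have hBsub : B.Subsingleton := Set.not_nontrivial_iff.1 fun hnt => by
    obtain ⟨u, hu, hBu⟩ := hremove B hBK hnt
    have hBu_le : B ⊆ B \ {u} :=
      hBmin.le_of_le ⟨Set.sdiff_subset.trans hBmin.prop.1, hBu⟩ Set.sdiff_subset
    exact (hBu_le hu).2 rfl
  exact ⟨v, hBA hv, hBsub.eq_singleton_of_mem hv ▸ hBK⟩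

section

variable {V : Type*} [AddCommGroup V] [Module ℝ V] {K : Set (Set V)}

lemma AxK1.empty_notMem (h1 : AxK1 K) (h4 : AxK4 K) : ∅ ∉ K := fun h =>
  h1 (h4 ∅ h {0} (Set.finite_singleton 0) (Set.empty_subset _))

lemma BinaryK.exists_diff_singleton_mem (hb : BinaryK K) {A : Set V} (hAf : A.Finite)
    (hA : A ∈ K) (hnt : A.Nontrivial) : ∃ u ∈ A, A \ {u} ∈ K := by
  obtain ⟨u, hu, huK⟩ := (hb A hAf).1 hA
  obtain ⟨v, hv, hvu⟩ := hnt.exists_ne u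
  exact ⟨v, hv, (hb _ hAf.sdiff).2 ⟨u, ⟨hu, hvu.symm⟩, huK⟩⟩

lemma binaryK_of_forall_exists_diff_singleton_mem (h1 : AxK1 K) (h4 : AxK4 K)
    (hremove : ∀ A ∈ K, A.Nontrivial → ∃ u ∈ A, A \ {u} ∈ K) : BinaryK K :=
  fun A hAf =>
    ⟨exists_singleton_mem_of_forall_exists_diff_singleton_mem (h1.empty_notMem h4) hremove hAf,
    fun ⟨u, hu, huK⟩ => h4 {u} huK A hAf (Set.singleton_subset_iff.2 hu)⟩

end

theorem stmt14 {V : Type*} [AddCommGroup V] [Module ℝ V]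
    (Vpos : Set V) (K : Set (Set V)) (hK : CoherentK Vpos K) :
    BinaryK K ↔ ∀ A ∈ K, A.Nontrivial → ∃ u ∈ A, A \ {u} ∈ K := by
  obtain ⟨hfin, -, h1, -, -, h4⟩ := hK
  exact ⟨fun hb A hA => hb.exists_diff_singleton_mem (hfin A hA) hA,
    binaryK_of_forall_exists_diff_singleton_mem h1 h4⟩
end

section
/- If D is an Archimedean set of desirable options (of gambles on a set X), then the functional P_D(f) := sup{μ ∈ ℝ : f − μ ∈ D} is a real-valued coherent lower prevision on the bounded gambles, i.e., P_D(f) ≥ inf f, P_D(λf) = λP_D(f) for λ > 0, and P_D(f + g) ≥ P_D(f) + P_D(g); moreover {f : P_D(f) > 0} = D. -/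
/-- The gambles (bounded real-valued maps) on `X`. -/
def Gmb (X : Type*) : Set (X → ℝ) :=
  {f | BddAbove (Set.range f) ∧ BddBelow (Set.range f)}

/-- The gambles with strictly positive infimum. -/
def GmbPos (X : Type*) : Set (X → ℝ) :=
  {f | f ∈ Gmb X ∧ 0 < sInf (Set.range f)}

/-- All finite positive linear combinations of elements of `A`. -/
def PosiG {X : Type*} (A : Set (X → ℝ)) : Set (X → ℝ) :=
  {w | ∃ n : ℕ, 0 < n ∧ ∃ (l : Fin n → ℝ) (u : Fin n → (X → ℝ)),
    (∀ k, 0 < l k) ∧ (∀ k, u k ∈ A) ∧ w = ∑ k, l k • u k}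

/-- Coherence of a set of desirable gambles. -/
def CoherentG {X : Type*} (D : Set (X → ℝ)) : Prop :=
  D ⊆ Gmb X ∧ (0 : X → ℝ) ∉ D ∧ GmbPos X ⊆ D ∧
  ∀ f ∈ D, ∀ g ∈ D, ∀ l m : ℝ, 0 ≤ l → 0 ≤ m → 0 < l + m → l • f + m • g ∈ D

/-- Archimedean set of desirable gambles. -/
def ArchG {X : Type*} (D : Set (X → ℝ)) : Prop :=
  CoherentG D ∧ ∀ f ∈ D, ∃ ε : ℝ, 0 < ε ∧ (fun x => f x - ε) ∈ D

/-- Mixing set of desirable gambles. -/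
def MixG {X : Type*} (D : Set (X → ℝ)) : Prop :=
  CoherentG D ∧ ∀ A : Set (X → ℝ), A.Finite → A ⊆ Gmb X →
    (PosiG A ∩ D).Nonempty → (A ∩ D).Nonempty

/-- The lower prevision associated with a set of desirable gambles. -/
noncomputable def PDfun {X : Type*} (D : Set (X → ℝ)) (f : X → ℝ) : ℝ :=
  sSup {μ : ℝ | (fun x => f x - μ) ∈ D}

/-- Coherent lower prevision on the gambles on `X`. -/
def CohLP {X : Type*} (P : (X → ℝ) → ℝ) : Prop :=
  (∀ f ∈ Gmb X, sInf (Set.range f) ≤ P f) ∧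
  (∀ f ∈ Gmb X, ∀ l : ℝ, 0 < l → P (l • f) = l * P f) ∧
  (∀ f ∈ Gmb X, ∀ g ∈ Gmb X, P f + P g ≤ P (f + g))

/-- Linear prevision on the gambles on `X`. -/
def LinP {X : Type*} (P : (X → ℝ) → ℝ) : Prop :=
  CohLP P ∧ ∀ f ∈ Gmb X, ∀ g ∈ Gmb X, P (f + g) = P f + P g

/-- The set of desirable gambles associated with a (lower) prevision. -/
def DPset {X : Type*} (P : (X → ℝ) → ℝ) : Set (X → ℝ) :=
  {f | f ∈ Gmb X ∧ 0 < P f}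

theorem stmt15 {X : Type*} [Nonempty X]
    (D : Set (X → ℝ)) (hD : ArchG D) :
    (∀ f ∈ Gmb X,
        ({μ : ℝ | (fun x => f x - μ) ∈ D}).Nonempty ∧
        BddAbove {μ : ℝ | (fun x => f x - μ) ∈ D}) ∧
    (∀ f ∈ Gmb X, sInf (Set.range f) ≤ PDfun D f) ∧
    (∀ f ∈ Gmb X, ∀ l : ℝ, 0 < l → PDfun D (l • f) = l * PDfun D f) ∧
    (∀ f ∈ Gmb X, ∀ g ∈ Gmb X, PDfun D f + PDfun D g ≤ PDfun D (f + g)) ∧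
    {f | f ∈ Gmb X ∧ 0 < PDfun D f} = D := by
  obtain ⟨⟨hsub, h0, hpos, hcomb⟩, harch⟩ := hD
  -- gambles bounded positively below are desirable
  have hposD : ∀ (g : X → ℝ) (c b : ℝ), 0 < c → (∀ x, c ≤ g x ∧ g x ≤ b) → g ∈ D := by
    intro g c b hc hcb
    apply hpos
    have hne : (Set.range g).Nonempty := Set.range_nonempty g
    have hlb : c ≤ sInf (Set.range g) := by
      apply le_csInf hne
      rintro _ ⟨x, rfl⟩
      exact (hcb x).1
    refine ⟨⟨⟨b, ?_⟩, ⟨c, ?_⟩⟩, lt_of_lt_of_le hc hlb⟩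
    · rintro _ ⟨x, rfl⟩; exact (hcb x).2
    · rintro _ ⟨x, rfl⟩; exact (hcb x).1
  have hsmul : ∀ f ∈ D, ∀ l : ℝ, 0 < l → l • f ∈ D := by
    intro f hf l hl
    have := hcomb f hf f hf l 0 hl.le le_rfl (by simpa using hl)
    simpa using this
  have hadd : ∀ f ∈ D, ∀ g ∈ D, f + g ∈ D := by
    intro f hf g hg
    have := hcomb f hf g hg 1 1 zero_le_one zero_le_one (by norm_num)
    simpa using this
  -- part 1: nonempty and bounded above
  have part1 : ∀ f ∈ Gmb X,
      ({μ : ℝ | (fun x => f x - μ) ∈ D}).Nonempty ∧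
      BddAbove {μ : ℝ | (fun x => f x - μ) ∈ D} := by
    intro f hf
    obtain ⟨⟨b, hb⟩, ⟨a, ha⟩⟩ := hf
    have hax : ∀ x, a ≤ f x := fun x => ha ⟨x, rfl⟩
    have hbx : ∀ x, f x ≤ b := fun x => hb ⟨x, rfl⟩
    constructor
    · refine ⟨a - 1, ?_⟩
      exact hposD _ 1 (b - a + 1) one_pos (fun x => ⟨by linarith [hax x], by linarith [hbx x]⟩)
    · refine ⟨b, ?_⟩
      intro μ hμ
      by_contra hlt
      push_neg at hlt
      have hneg : (fun x => μ - f x) ∈ D :=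
        hposD _ (μ - b) (μ - a) (by linarith) (fun x => ⟨by linarith [hbx x], by linarith [hax x]⟩)
      have h0' := hadd _ hμ _ hneg
      have : ((fun x => f x - μ) + fun x => μ - f x) = (0 : X → ℝ) := by
        funext x; simp
      rw [this] at h0'
      exact h0 h0'
  refine ⟨part1, ?_, ?_, ?_, ?_⟩
  -- dominates the infimum
  · intro f hf
    have hf' := hf
    obtain ⟨⟨b, hb⟩, ⟨a, ha⟩⟩ := hf'
    have hbx : ∀ x, f x ≤ b := fun x => hb ⟨x, rfl⟩
    have hix : ∀ x, sInf (Set.range f) ≤ f x := fun x => csInf_le ⟨a, ha⟩ ⟨x, rfl⟩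
    refine le_of_forall_pos_le_add ?_
    intro ε hε
    have hmem : sInf (Set.range f) - ε ∈ {μ : ℝ | (fun x => f x - μ) ∈ D} :=
      hposD _ ε (b - sInf (Set.range f) + ε) hε
        (fun x => ⟨by linarith [hix x], by linarith [hbx x]⟩)
    have := le_csSup (part1 f hf).2 hmem
    unfold PDfun
    linarith
  -- homogeneity
  · intro f hf l hl
    have hlf : l • f ∈ Gmb X := by
      obtain ⟨⟨b, hb⟩, ⟨a, ha⟩⟩ := hf
      have hax : ∀ x, a ≤ f x := fun x => ha ⟨x, rfl⟩
      have hbx : ∀ x, f x ≤ b := fun x => hb ⟨x, rfl⟩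
      constructor
      · exact ⟨l * b, by rintro _ ⟨x, rfl⟩; exact mul_le_mul_of_nonneg_left (hbx x) hl.le⟩
      · exact ⟨l * a, by rintro _ ⟨x, rfl⟩; exact mul_le_mul_of_nonneg_left (hax x) hl.le⟩
    have key : ∀ μ : ℝ, (fun x => f x - μ) ∈ D → (fun x => (l • f) x - l * μ) ∈ D := by
      intro μ hμ
      have := hsmul _ hμ l hl
      have heq : l • (fun x => f x - μ) = (fun x => (l • f) x - l * μ) := by
        funext x; simp [mul_sub]
      rwa [heq] at this
    have key' : ∀ μ : ℝ, (fun x => (l • f) x - μ) ∈ D → (fun x => f x - μ / l) ∈ D := by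
      intro μ hμ
      have := hsmul _ hμ l⁻¹ (inv_pos.mpr hl)
      have heq : l⁻¹ • (fun x => (l • f) x - μ) = (fun x => f x - μ / l) := by
        funext x
        simp [mul_sub, div_eq_inv_mul]
        field_simp
      rwa [heq] at this
    unfold PDfun
    apply le_antisymm
    · apply csSup_le (part1 _ hlf).1
      intro μ hμ
      have h1 : μ / l ≤ sSup {μ : ℝ | (fun x => f x - μ) ∈ D} :=
        le_csSup (part1 f hf).2 (key' μ hμ)
      calc μ = l * (μ / l) := by field_simp
        _ ≤ l * sSup {μ : ℝ | (fun x => f x - μ) ∈ D} := by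
            exact mul_le_mul_of_nonneg_left h1 hl.le
    · rw [mul_comm, ← le_div_iff₀ hl]
      apply csSup_le (part1 f hf).1
      intro μ hμ
      have h1 : l * μ ≤ sSup {μ : ℝ | (fun x => (l • f) x - μ) ∈ D} :=
        le_csSup (part1 _ hlf).2 (key μ hμ)
      rw [le_div_iff₀ hl]
      linarith
  -- superadditivity
  · intro f hf g hg
    have hfg : f + g ∈ Gmb X := by
      obtain ⟨⟨b, hb⟩, ⟨a, ha⟩⟩ := hf
      obtain ⟨⟨b', hb'⟩, ⟨a', ha'⟩⟩ := hg
      constructor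
      · refine ⟨b + b', ?_⟩
        rintro _ ⟨x, rfl⟩
        exact add_le_add (hb ⟨x, rfl⟩) (hb' ⟨x, rfl⟩)
      · refine ⟨a + a', ?_⟩
        rintro _ ⟨x, rfl⟩
        exact add_le_add (ha ⟨x, rfl⟩) (ha' ⟨x, rfl⟩)
    unfold PDfun
    have hT : ∀ μ ∈ {μ : ℝ | (fun x => f x - μ) ∈ D}, ∀ ν ∈ {μ : ℝ | (fun x => g x - μ) ∈ D},
        μ + ν ≤ sSup {μ : ℝ | (fun x => (f + g) x - μ) ∈ D} := by
      intro μ hμ ν hν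
      have hmem : (fun x => (f + g) x - (μ + ν)) ∈ D := by
        have := hadd _ hμ _ hν
        have heq : ((fun x => f x - μ) + fun x => g x - ν) = (fun x => (f + g) x - (μ + ν)) := by
          funext x; simp; ring
        rwa [heq] at this
      exact le_csSup (part1 _ hfg).2 hmem
    have h1 : sSup {μ : ℝ | (fun x => f x - μ) ∈ D} ≤
        sSup {μ : ℝ | (fun x => (f + g) x - μ) ∈ D} - sSup {μ : ℝ | (fun x => g x - μ) ∈ D} := by
      apply csSup_le (part1 f hf).1
      intro μ hμ
      have h2 : sSup {μ : ℝ | (fun x => g x - μ) ∈ D} ≤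
          sSup {μ : ℝ | (fun x => (f + g) x - μ) ∈ D} - μ := by
        apply csSup_le (part1 g hg).1
        intro ν hν
        linarith [hT μ hμ ν hν]
      linarith
    linarith
  -- the set equality
  · ext f
    simp only [Set.mem_setOf_eq]
    constructor
    · rintro ⟨hfG, hfP⟩
      unfold PDfun at hfP
      obtain ⟨μ, hμ, hμpos⟩ := exists_lt_of_lt_csSup (part1 f hfG).1 hfP
      have h1 : (fun _ : X => (1 : ℝ)) ∈ D :=
        hposD _ 1 1 one_pos (fun x => ⟨le_refl _, le_refl _⟩)
      have := hcomb _ hμ _ h1 1 μ zero_le_one hμpos.le (by linarith)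
      have heq : (1 : ℝ) • (fun x => f x - μ) + μ • (fun _ : X => (1 : ℝ)) = f := by
        funext x; simp
      rwa [heq] at this
    · intro hf
      have hfG : f ∈ Gmb X := hsub hf
      obtain ⟨ε, hε, hεD⟩ := harch f hf
      refine ⟨hfG, ?_⟩
      unfold PDfun
      exact lt_of_lt_of_le hε (le_csSup (part1 f hfG).2 hεD)
end

section
/- If P is a coherent lower prevision on the bounded gambles on X, then D_P := {f : P(f) > 0} is an Archimedean set of desirable options, and sup{μ ∈ ℝ : P(f − μ) > 0} = P(f) for every gamble f. -/
/-! The whole proof rests on constant additivity `P (f - μ) = P f - μ`, which follows from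
superadditivity together with `P c = c` for constants. It makes `{μ | P (f - μ) > 0}` the open
half-line below `P f`, so its supremum is `P f`, and taking `μ = P f / 2` gives the Archimedean
property. Coherence of `{f | P f > 0}` is superlinearity of `P`. -/

section Gambles

variable {X : Type*} {f g : X → ℝ}

lemma const_mem_gmb (c : ℝ) : (fun _ : X => c) ∈ Gmb X :=
  ⟨⟨c, by rintro - ⟨x, rfl⟩; rfl⟩, ⟨c, by rintro - ⟨x, rfl⟩; rfl⟩⟩

lemma add_mem_gmb (hf : f ∈ Gmb X) (hg : g ∈ Gmb X) : f + g ∈ Gmb X :=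
  ⟨hf.1.range_add hg.1, hf.2.range_add hg.2⟩

lemma smul_mem_gmb (hf : f ∈ Gmb X) {l : ℝ} (hl : 0 ≤ l) : l • f ∈ Gmb X :=
  ⟨hf.1.range_comp_left (monotone_mul_left_of_nonneg hl),
    hf.2.range_comp_left (monotone_mul_left_of_nonneg hl)⟩

lemma sub_const_mem_gmb (hf : f ∈ Gmb X) (μ : ℝ) : (fun x => f x - μ) ∈ Gmb X :=
  ⟨hf.1.range_comp_left fun _ _ h => sub_le_sub_right h μ,
    hf.2.range_comp_left fun _ _ h => sub_le_sub_right h μ⟩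

end Gambles

namespace CohLP

variable {X : Type*} {P : (X → ℝ) → ℝ} {f g : X → ℝ}

lemma map_zero (hP : CohLP P) : P 0 = 0 := by
  have h := hP.2.1 0 (const_mem_gmb 0) 2 two_pos
  rw [smul_zero] at h
  linarith

lemma map_smul_of_nonneg (hP : CohLP P) (hf : f ∈ Gmb X) {l : ℝ} (hl : 0 ≤ l) :
    P (l • f) = l * P f := by
  rcases hl.eq_or_lt with rfl | hl
  · rw [zero_smul, zero_mul, hP.map_zero]
  · exact hP.2.1 f hf l hl

lemma le_map_smul_add_smul (hP : CohLP P) (hf : f ∈ Gmb X) (hg : g ∈ Gmb X) {l m : ℝ}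
    (hl : 0 ≤ l) (hm : 0 ≤ m) : l * P f + m * P g ≤ P (l • f + m • g) := by
  rw [← hP.map_smul_of_nonneg hf hl, ← hP.map_smul_of_nonneg hg hm]
  exact hP.2.2 _ (smul_mem_gmb hf hl) _ (smul_mem_gmb hg hm)

lemma pos_of_mem_gmbPos (hP : CohLP P) (hf : f ∈ GmbPos X) : 0 < P f :=
  hf.2.trans_le (hP.1 f hf.1)

lemma map_const [Nonempty X] (hP : CohLP P) (c : ℝ) : P (fun _ : X => c) = c := by
  have hlow := hP.1 _ (const_mem_gmb (X := X) c)
  have hlow_neg := hP.1 _ (const_mem_gmb (X := X) (-c))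
  have hsum := hP.2.2 _ (const_mem_gmb (X := X) c) _ (const_mem_gmb (X := X) (-c))
  have hcancel : (fun _ : X => c) + (fun _ : X => -c) = 0 := funext fun _ => add_neg_cancel c
  rw [Set.range_const, csInf_singleton] at hlow hlow_neg
  rw [hcancel, hP.map_zero] at hsum
  linarith

lemma map_sub_const [Nonempty X] (hP : CohLP P) (hf : f ∈ Gmb X) (μ : ℝ) :
    P (fun x => f x - μ) = P f - μ := by
  have hle : P f + P (fun _ => -μ) ≤ P (fun x => f x - μ) := by
    convert hP.2.2 f hf _ (const_mem_gmb (-μ)) using 2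
    exact funext fun x => sub_eq_add_neg (f x) μ
  have hge : P (fun x => f x - μ) + P (fun _ => μ) ≤ P f := by
    convert hP.2.2 _ (sub_const_mem_gmb hf μ) _ (const_mem_gmb μ) using 2
    exact funext fun x => (sub_add_cancel (f x) μ).symm
  rw [hP.map_const] at hle hge
  linarith

lemma coherentG_dpset (hP : CohLP P) : CoherentG (DPset P) := by
  refine ⟨fun f hf => hf.1, fun h => h.2.ne' hP.map_zero,
    fun f hf => ⟨hf.1, hP.pos_of_mem_gmbPos hf⟩, ?_⟩
  rintro f ⟨hf, hPf⟩ g ⟨hg, hPg⟩ l m hl hm hlm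
  refine ⟨add_mem_gmb (smul_mem_gmb hf hl) (smul_mem_gmb hg hm), ?_⟩
  have hpos : 0 < l * P f + m * P g := by
    rcases hl.eq_or_lt with rfl | hl
    · rw [zero_add] at hlm
      rw [zero_mul, zero_add]
      exact mul_pos hlm hPg
    · exact add_pos_of_pos_of_nonneg (mul_pos hl hPf) (mul_nonneg hm hPg.le)
  exact hpos.trans_le (hP.le_map_smul_add_smul hf hg hl hm)

lemma setOf_sub_mem_dpset [Nonempty X] (hP : CohLP P) (hf : f ∈ Gmb X) :
    {μ : ℝ | (fun x => f x - μ) ∈ DPset P} = Set.Iio (P f) := by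
  ext μ
  simp only [DPset, Set.mem_ofPred_eq, Set.mem_Iio, hP.map_sub_const hf, sub_pos,
    and_iff_right (sub_const_mem_gmb hf μ)]

lemma archG_dpset [Nonempty X] (hP : CohLP P) : ArchG (DPset P) := by
  refine ⟨hP.coherentG_dpset, fun f ⟨hf, hPf⟩ => ⟨P f / 2, half_pos hPf, ?_⟩⟩
  have hhalf : P f / 2 ∈ {μ : ℝ | (fun x => f x - μ) ∈ DPset P} := by
    rw [hP.setOf_sub_mem_dpset hf]
    exact half_lt_self hPf
  exact hhalf

end CohLP

theorem stmt16 {X : Type*} [Nonempty X]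
    (P : (X → ℝ) → ℝ) (hP : CohLP P) :
    ArchG (DPset P) ∧
    ∀ f ∈ Gmb X, sSup {μ : ℝ | (fun x => f x - μ) ∈ DPset P} = P f :=
  ⟨hP.archG_dpset, fun f hf => by rw [hP.setOf_sub_mem_dpset hf, csSup_Iio]⟩
end

section
/- If D is an Archimedean and mixing set of desirable options of gambles on X, then the coherent lower prevision P_D(f) = sup{μ : f − μ ∈ D} is a linear prevision, i.e., additionally satisfies P_D(f+g) = P_D(f) + P_D(g) for all bounded gambles f, g. -/
lemma gmb_shift {X : Type*} {f : X → ℝ} (hf : f ∈ Gmb X) (μ : ℝ) :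
    (fun x => f x - μ) ∈ Gmb X := by
  obtain ⟨⟨a, ha⟩, ⟨b, hb⟩⟩ := hf
  constructor
  · exact ⟨a - μ, by rintro _ ⟨x, rfl⟩; have := ha (Set.mem_range_self x); simpa using by linarith⟩
  · exact ⟨b - μ, by rintro _ ⟨x, rfl⟩; have := hb (Set.mem_range_self x); simpa using by linarith⟩

lemma gmb_const_sub {X : Type*} {f : X → ℝ} (hf : f ∈ Gmb X) (μ : ℝ) :
    (fun x => μ - f x) ∈ Gmb X := by
  obtain ⟨⟨a, ha⟩, ⟨b, hb⟩⟩ := hf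
  constructor
  · exact ⟨μ - b, by rintro _ ⟨x, rfl⟩; have := hb (Set.mem_range_self x); simpa using by linarith⟩
  · exact ⟨μ - a, by rintro _ ⟨x, rfl⟩; have := ha (Set.mem_range_self x); simpa using by linarith⟩

lemma gmb_add {X : Type*} {f g : X → ℝ} (hf : f ∈ Gmb X) (hg : g ∈ Gmb X) :
    f + g ∈ Gmb X := by
  obtain ⟨⟨a, ha⟩, ⟨b, hb⟩⟩ := hf
  obtain ⟨⟨c, hc⟩, ⟨d, hd⟩⟩ := hg
  constructor
  · refine ⟨a + c, ?_⟩
    rintro _ ⟨x, rfl⟩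
    have h1 := ha (Set.mem_range_self x); have h2 := hc (Set.mem_range_self x)
    simpa [Pi.add_apply] using by linarith
  · refine ⟨b + d, ?_⟩
    rintro _ ⟨x, rfl⟩
    have h1 := hb (Set.mem_range_self x); have h2 := hd (Set.mem_range_self x)
    simpa [Pi.add_apply] using by linarith

lemma mem_D_of_lt_inf {X : Type*} [Nonempty X] {D : Set (X → ℝ)} (hcoh : CoherentG D)
    {f : X → ℝ} (hf : f ∈ Gmb X) {μ : ℝ} (hμ : μ < sInf (Set.range f)) :
    (fun x => f x - μ) ∈ D := by
  apply hcoh.2.2.1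
  refine ⟨gmb_shift hf μ, ?_⟩
  have hne : (Set.range fun x => f x - μ).Nonempty := Set.range_nonempty _
  have hle : sInf (Set.range f) - μ ≤ sInf (Set.range fun x => f x - μ) := by
    apply le_csInf hne
    rintro _ ⟨x, rfl⟩
    have := csInf_le hf.2 (Set.mem_range_self x)
    simp only []
    linarith
  linarith

lemma Sset_nonempty {X : Type*} [Nonempty X] {D : Set (X → ℝ)} (hcoh : CoherentG D)
    {f : X → ℝ} (hf : f ∈ Gmb X) :
    {μ : ℝ | (fun x => f x - μ) ∈ D}.Nonempty :=
  ⟨sInf (Set.range f) - 1, mem_D_of_lt_inf hcoh hf (by linarith)⟩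

lemma Sset_bddAbove {X : Type*} [Nonempty X] {D : Set (X → ℝ)} (hcoh : CoherentG D)
    {f : X → ℝ} (hf : f ∈ Gmb X) :
    BddAbove {μ : ℝ | (fun x => f x - μ) ∈ D} := by
  refine ⟨sSup (Set.range f), ?_⟩
  intro μ hμ
  by_contra h
  push_neg at h
  have hneg : (fun x => μ - f x) ∈ D := by
    apply hcoh.2.2.1
    refine ⟨gmb_const_sub hf μ, ?_⟩
    have hne : (Set.range fun x => μ - f x).Nonempty := Set.range_nonempty _
    have hle : μ - sSup (Set.range f) ≤ sInf (Set.range fun x => μ - f x) := by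
      apply le_csInf hne
      rintro _ ⟨x, rfl⟩
      have := le_csSup hf.1 (Set.mem_range_self x)
      simp only []
      linarith
    linarith
  have hcomb := hcoh.2.2.2 _ hμ _ hneg 1 1 zero_le_one zero_le_one (by norm_num)
  have h0 : (1:ℝ) • (fun x => f x - μ) + (1:ℝ) • (fun x => μ - f x) = (0 : X → ℝ) := by
    funext x; simp
  rw [h0] at hcomb
  exact hcoh.2.1 hcomb

theorem stmt17 {X : Type*} [Nonempty X]
    (D : Set (X → ℝ)) (harch : ArchG D) (hmix : MixG D) :
    ∀ f ∈ Gmb X, ∀ g ∈ Gmb X, PDfun D (f + g) = PDfun D f + PDfun D g := by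
  have hcoh := hmix.1
  intro f hf g hg
  have hfg : f + g ∈ Gmb X := gmb_add hf hg
  apply le_antisymm
  · -- subadditivity, via mixing
    apply csSup_le (Sset_nonempty hcoh hfg)
    intro μ hμ
    by_contra h
    push_neg at h
    set α := PDfun D f + (μ - PDfun D f - PDfun D g) / 2 with hα_def
    set β := μ - α with hβ_def
    have hα : PDfun D f < α := by rw [hα_def]; linarith
    have hβ : PDfun D g < β := by rw [hβ_def, hα_def]; linarith
    set p : X → ℝ := fun x => f x - α with hp_def
    set q : X → ℝ := fun x => g x - β with hq_def
    have hpD : p ∉ D := fun hd => absurd (le_csSup (Sset_bddAbove hcoh hf) hd) (not_le.2 hα)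
    have hqD : q ∉ D := fun hd => absurd (le_csSup (Sset_bddAbove hcoh hg) hd) (not_le.2 hβ)
    have hA : ({p, q} : Set (X → ℝ)).Finite := (Set.finite_singleton q).insert p
    have hAsub : ({p, q} : Set (X → ℝ)) ⊆ Gmb X := by
      rintro w (rfl | rfl)
      · exact gmb_shift hf α
      · exact gmb_shift hg β
    have hposi : (fun x => (f + g) x - μ) ∈ PosiG ({p, q} : Set (X → ℝ)) := by
      refine ⟨2, two_pos, fun _ => 1, ![p, q], fun k => one_pos, ?_, ?_⟩
      · intro k
        fin_cases k
        · exact Set.mem_insert _ _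
        · exact Set.mem_insert_of_mem _ rfl
      · funext x
        simp [Fin.sum_univ_two, hp_def, hq_def, Pi.add_apply, hβ_def]
        ring
    obtain ⟨w, hwA, hwD⟩ := hmix.2 {p, q} hA hAsub ⟨_, hposi, hμ⟩
    rcases hwA with rfl | rfl
    · exact hpD hwD
    · exact hqD hwD
  · -- superadditivity, via coherence
    have key : ∀ μ ∈ {μ : ℝ | (fun x => f x - μ) ∈ D},
        ∀ ν ∈ {ν : ℝ | (fun x => g x - ν) ∈ D},
        (fun x => (f + g) x - (μ + ν)) ∈ D := by
      intro μ hμ ν hν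
      have hcomb := hcoh.2.2.2 _ hμ _ hν 1 1 zero_le_one zero_le_one (by norm_num)
      have h0 : (1:ℝ) • (fun x => f x - μ) + (1:ℝ) • (fun x => g x - ν)
          = (fun x => (f + g) x - (μ + ν)) := by
        funext x; simp [Pi.add_apply]; ring
      rwa [h0] at hcomb
    have h1 : ∀ ν ∈ {ν : ℝ | (fun x => g x - ν) ∈ D}, PDfun D f + ν ≤ PDfun D (f + g) := by
      intro ν hν
      have h2 : ∀ μ ∈ {μ : ℝ | (fun x => f x - μ) ∈ D}, μ ≤ PDfun D (f + g) - ν := by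
        intro μ hμ
        have := le_csSup (Sset_bddAbove hcoh hfg) (key μ hμ ν hν)
        unfold PDfun
        linarith [this]
      have := csSup_le (Sset_nonempty hcoh hf) h2
      unfold PDfun at *
      linarith
    have h3 : ∀ ν ∈ {ν : ℝ | (fun x => g x - ν) ∈ D}, ν ≤ PDfun D (f + g) - PDfun D f := by
      intro ν hν; have := h1 ν hν; linarith
    have := csSup_le (Sset_nonempty hcoh hg) h3
    unfold PDfun at *
    linarith
end

section
/- Let K be a set of desirable option sets containing the empty set in its complement and satisfying axioms K1–K4. Then the set RN(K) := {A ∈ Q : ∃B ∈ K with B \ V_{≤0} ⊆ A ⊆ B} also satisfies K1–K4, does not contain the empty set, and in addition satisfies K0 (A ∈ RN(K) implies A \ {0} ∈ RN(K)). -/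
/-!
`RN K` inherits K0, K2 and K4 almost directly. K1 and `∅ ∉ RN K` reduce to the fact that no
`B ∈ K` consists of non-positive options only: for a non-zero `u ∈ B` with `-u > 0`, combining
`B` with `{-u}` (K2, K3) replaces `u` by `0`, and repeating this ends in `∅` or `{0}`, neither of
which lies in `K`. For K3, a combination over `A1 × A2` is extended to `B1 × B2` by coefficients
that return the dropped element, which is non-positive.
-/

section RN

variable {V : Type*} [AddCommGroup V] [Module ℝ V] {Vpos : Set V} {K : Set (Set V)}

theorem insert_zero_diff_singleton_mem (h3 : AxK3 K) {B : Set V} (hB : B ∈ K) {u : V}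
    (hu : u ∈ B) (hnu : ({-u} : Set V) ∈ K) : insert 0 (B \ {u}) ∈ K := by
  classical
  convert h3 B hB {-u} hnu (fun _ _ => 1) (fun w _ => if w = u then 1 else 0)
    (fun w _ v _ => by split_ifs <;> norm_num) using 1
  ext w
  simp only [Set.mem_insert_iff, Set.mem_sdiff, Set.mem_singleton_iff, Set.mem_ofPred_eq,
    exists_eq_left, one_smul]
  constructor
  · rintro (rfl | ⟨hw, hwu⟩)
    · exact ⟨u, hu, by simp⟩
    · exact ⟨w, hw, by simp [hwu]⟩
  · rintro ⟨w', hw', rfl⟩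
    by_cases hw'u : w' = u <;> simp [hw'u, hw']

theorem not_subset_insert_zero_of_forall_neg_singleton_mem (hemp : (∅ : Set V) ∉ K)
    (h1 : AxK1 K) (h3 : AxK3 K) (S : Finset V) (hS : ∀ a ∈ S, ({-a} : Set V) ∈ K) :
    ∀ B ∈ K, ¬ B ⊆ insert 0 ↑S := by
  classical
  induction S using Finset.induction_on with
  | empty =>
    intro B hB hB0
    rw [Finset.coe_empty, insert_empty_eq] at hB0
    rcases Set.subset_singleton_iff_eq.mp hB0 with rfl | rfl
    exacts [hemp hB, h1 hB]
  | insert a S _ ih =>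
    intro B hB hBS
    have hS' : ∀ b ∈ S, ({-b} : Set V) ∈ K := fun b hb => hS b (Finset.mem_insert_of_mem hb)
    by_cases ha : a ∈ B
    · refine ih hS' _
        (insert_zero_diff_singleton_mem h3 hB ha (hS a (Finset.mem_insert_self a S))) ?_
      rintro w (rfl | ⟨hw, hwa : w ≠ a⟩)
      · exact Set.mem_insert 0 _
      · simpa [hwa] using hBS hw
    · refine ih hS' B hB fun w hw => ?_
      have hwa : w ≠ a := fun h => ha (h ▸ hw)
      simpa [hwa] using hBS hw

theorem not_subset_Vneg_of_mem (hQ : ∀ A ∈ K, A.Finite) (hemp : (∅ : Set V) ∉ K)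
    (h1 : AxK1 K) (h2 : AxK2 Vpos K) (h3 : AxK3 K) {B : Set V} (hB : B ∈ K) :
    ¬ B ⊆ Vneg Vpos := by
  intro hBneg
  have hfin : (B \ {0}).Finite := (hQ B hB).sdiff
  refine not_subset_insert_zero_of_forall_neg_singleton_mem hemp h1 h3 hfin.toFinset
    (fun a ha => ?_) B hB (fun w hw => ?_)
  · rw [Set.Finite.mem_toFinset] at ha
    exact h2 _ ((hBneg ha.1).resolve_left ha.2)
  · rcases eq_or_ne w 0 with hw0 | hw0
    · exact Or.inl hw0
    · exact Or.inr ((Set.Finite.mem_toFinset _).mpr ⟨hw, hw0⟩)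

theorem not_subset_Vneg_of_mem_RN (hQ : ∀ A ∈ K, A.Finite) (hemp : (∅ : Set V) ∉ K)
    (h1 : AxK1 K) (h2 : AxK2 Vpos K) (h3 : AxK3 K) {A : Set V} (hA : A ∈ RN Vpos K) :
    ¬ A ⊆ Vneg Vpos := by
  obtain ⟨-, B, hB, hBA, -⟩ := hA
  intro hAneg
  refine not_subset_Vneg_of_mem hQ hemp h1 h2 h3 hB fun w hw => ?_
  by_contra hw'
  exact hw' (hAneg (hBA ⟨hw, hw'⟩))

theorem axK2_RN (h2 : AxK2 Vpos K) : AxK2 Vpos (RN Vpos K) :=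
  fun u hu => ⟨Set.finite_singleton u, {u}, h2 u hu, Set.sdiff_subset, subset_rfl⟩

theorem axK3_RN (hQ : ∀ A ∈ K, A.Finite) (h3 : AxK3 K) : AxK3 (RN Vpos K) := by
  classical
  rintro A1 ⟨-, B1, hB1, hB1A1, hA1B1⟩ A2 ⟨-, B2, hB2, hB2A2, hA2B2⟩ l m hlm
  let l' : V → V → ℝ := fun u v => if u ∈ A1 then if v ∈ A2 then l u v else 0 else 1
  let m' : V → V → ℝ := fun u v => if u ∈ A1 then if v ∈ A2 then m u v else 1 else 0
  have hl'm' :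
      ∀ u ∈ B1, ∀ v ∈ B2, 0 ≤ l' u v ∧ 0 ≤ m' u v ∧ 0 < l' u v + m' u v := by
    intro u _ v _
    simp only [l', m']
    split_ifs with hu hv
    exacts [hlm u hu v hv, by norm_num, by norm_num]
  have hC' := h3 B1 hB1 B2 hB2 l' m' hl'm'
  have hCC' : {w | ∃ u ∈ A1, ∃ v ∈ A2, w = l u v • u + m u v • v} ⊆
      {w | ∃ u ∈ B1, ∃ v ∈ B2, w = l' u v • u + m' u v • v} := by
    rintro w ⟨u, hu, v, hv, rfl⟩
    exact ⟨u, hA1B1 hu, v, hA2B2 hv, by simp [l', m', hu, hv]⟩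
  refine ⟨(hQ _ hC').subset hCC', _, hC', ?_, hCC'⟩
  rintro w ⟨⟨u, hu, v, hv, rfl⟩, hw⟩
  by_cases hu' : u ∈ A1
  · by_cases hv' : v ∈ A2
    · exact ⟨u, hu', v, hv', by simp [l', m', hu', hv']⟩
    · simp [l', m', hu', hv'] at hw
      exact absurd (hB2A2 ⟨hv, hw⟩) hv'
  · simp [l', m', hu'] at hw
    exact absurd (hB1A1 ⟨hu, hw⟩) hu'

theorem axK4_RN (hQ : ∀ A ∈ K, A.Finite) (h4 : AxK4 K) : AxK4 (RN Vpos K) := by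
  rintro A1 ⟨-, B, hB, hBA1, -⟩ A2 hA2 hA12
  refine ⟨hA2, B ∪ A2, h4 B hB _ ((hQ B hB).union hA2) Set.subset_union_left, ?_,
    Set.subset_union_right⟩
  rintro w ⟨hw | hw, hw'⟩
  exacts [hA12 (hBA1 ⟨hw, hw'⟩), hw]

theorem axK0_RN : AxK0 (RN Vpos K) := by
  rintro A ⟨hA, B, hB, hBA, hAB⟩
  exact ⟨hA.sdiff, B, hB, fun w hw => ⟨hBA hw, fun hw0 => hw.2 (Or.inl hw0)⟩,
    Set.sdiff_subset.trans hAB⟩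

end RN

theorem stmt19 {V : Type*} [AddCommGroup V] [Module ℝ V]
    (Vpos : Set V) (K : Set (Set V)) (hQ : ∀ A ∈ K, A.Finite)
    (hemp : (∅ : Set V) ∉ K)
    (h1 : AxK1 K) (h2 : AxK2 Vpos K) (h3 : AxK3 K) (h4 : AxK4 K) :
    AxK1 (RN Vpos K) ∧ AxK2 Vpos (RN Vpos K) ∧ AxK3 (RN Vpos K) ∧
      AxK4 (RN Vpos K) ∧ (∅ : Set V) ∉ RN Vpos K ∧ AxK0 (RN Vpos K) := by
  refine ⟨fun h => not_subset_Vneg_of_mem_RN hQ hemp h1 h2 h3 h ?_, axK2_RN h2, axK3_RN hQ h3,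
    axK4_RN hQ h4, fun h => not_subset_Vneg_of_mem_RN hQ hemp h1 h2 h3 h (Set.empty_subset _),
    axK0_RN⟩
  exact Set.singleton_subset_iff.mpr (Or.inl rfl)
end
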